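/- arXiv:2412.06031 — 4 statements merged into one kernel-verified Lean document; each statement's English description precedes it below -/
import Mathlib

section
/- For every integer n ≥ 2, the free group F_n of rank n is selfless with respect to its standard free generating set. -/
/-!
Identify `F(α) ∗ ℤ` with `F(Option α)`, the extra generator being `t = none`, and let `φₘ`
substitute `w = (x y^{2m} x)²` for `t`. By ping-pong on the occurrences of `t`, a reduced word of
length at most `2m` beginning with `t^{±1}` is sent to an element whose reduced word begins with
`(x y^{2m} x)^{±1}`: the prefix `x y^{2m} x` is so rigid that no nontrivial element of length at
most `2m` can move one such prefix onto another. Hence no nontrivial element of length `≤ 2m`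
lies in the kernel of `φₘ`, so `φₘ` is injective on the ball of radius `m`; it stretches lengths by
at most `|w| = 4m + 4`, and `m (4m + 4) ≤ (2m + 2)²` grows subexponentially.
-/

open Filter Monoid

/-- `wordBall T r`: elements of `K` expressible as a product of at most `r` elements
of `T ∪ T⁻¹` (so `1 ∈ wordBall T 0`). -/
def wordBall {K : Type*} [Group K] (T : Set K) (r : ℝ) : Set K :=
  {g | ∃ l : List K, (l.length : ℝ) ≤ r ∧ (∀ x ∈ l, x ∈ T ∨ x⁻¹ ∈ T) ∧ l.prod = g}

/-- A group `K` with generating set `T` is *selfless* if there are a function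
`f : ℕ → (0,∞)` with `liminf f(n)^{1/n} = 1` and, for each `n ≥ 1`, an epimorphism
`φₙ : K ∗ ⟨a⟩ → K` restricting to the identity on `K`, injective on the ball
`B_{T∪{a}}(n)`, and with `φₙ(B_{T∪{a}}(n)) ⊆ B_T(f(n))`.  Here `⟨a⟩` is an infinite
cyclic group, realized as `Multiplicative ℤ` with generator `a = ofAdd 1`. -/
def IsSelfless (K : Type*) [Group K] (T : Set K) : Prop :=
  ∃ f : ℕ → ℝ, (∀ n, 0 < f n) ∧
    Filter.liminf (fun n : ℕ => f n ^ ((n : ℝ)⁻¹)) Filter.atTop = 1 ∧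
    ∀ n : ℕ, 1 ≤ n → ∃ φ : Coprod K (Multiplicative ℤ) →* K,
      Function.Surjective φ ∧
      (∀ g : K, φ (Coprod.inl g) = g) ∧
      Set.InjOn φ (wordBall ((⇑(Coprod.inl : K →* Coprod K (Multiplicative ℤ))) '' T ∪
        {Coprod.inr (Multiplicative.ofAdd (1 : ℤ))}) n) ∧
      ⇑φ '' (wordBall ((⇑(Coprod.inl : K →* Coprod K (Multiplicative ℤ))) '' T ∪
        {Coprod.inr (Multiplicative.ofAdd (1 : ℤ))}) n) ⊆ wordBall T (f n)

namespace FreeGroup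

section Words

variable {α : Type*}

theorem isReduced_of_forall_snd_eq {L : List (α × Bool)} {δ : Bool} (h : ∀ a ∈ L, a.2 = δ) :
    IsReduced L :=
  List.Pairwise.isChain (List.pairwise_of_forall_mem_list fun a ha b hb _ => by
    rw [h a ha, h b hb])

theorem isReduced_map_iff {β : Type*} {f : α → β} (hf : Function.Injective f)
    {L : List (α × Bool)} : IsReduced (L.map fun a => (f a.1, a.2)) ↔ IsReduced L := by
  simp [IsReduced, List.isChain_map, hf.eq_iff]

theorem eq_nil_of_isReduced_append_invRev {p : List (α × Bool)} (h : IsReduced (p ++ invRev p)) :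
    p = [] := by
  rcases p.eq_nil_or_concat with rfl | ⟨p, a, rfl⟩
  · rfl
  · have hpair : IsReduced [a, (a.1, !a.2)] := h.infix ⟨p, invRev p, by simp [invRev]⟩
    simp at hpair

theorem exists_eq_map_some_append (L : List (Option α × Bool)) :
    ∃ ℓ : List (α × Bool), L = ℓ.map (fun a => (some a.1, a.2)) ∨
      ∃ δ rest, L = ℓ.map (fun a => (some a.1, a.2)) ++ (none, δ) :: rest := by
  induction L with
  | nil => exact ⟨[], Or.inl rfl⟩
  | cons a L ih =>
    obtain ⟨_ | b, δ⟩ := a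
    · exact ⟨[], Or.inr ⟨δ, L, rfl⟩⟩
    · obtain ⟨ℓ, hℓ⟩ := ih
      exact ⟨(b, δ) :: ℓ, by simpa using hℓ⟩

theorem mk_map_some (ℓ : List (α × Bool)) :
    mk (ℓ.map fun a => (some a.1, a.2)) = map some (mk ℓ) :=
  map.mk.symm

variable [DecidableEq α]

theorem exists_reduce_append {V U : List (α × Bool)} (hV : IsReduced V) (hU : IsReduced U) :
    ∃ p c s, V = p ++ c ∧ U = invRev c ++ s ∧ reduce (V ++ U) = p ++ s := by
  induction V using List.reverseRecOn generalizing U with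
  | nil => exact ⟨[], [], U, rfl, rfl, hU.reduce_eq⟩
  | append_singleton V v ih =>
    by_cases hcancel : ∃ U', U = (v.1, !v.2) :: U'
    · obtain ⟨U', rfl⟩ := hcancel
      obtain ⟨p, c, s, rfl, rfl, hred⟩ :=
        ih (U := U') (hV.infix ⟨[], [v], rfl⟩) (hU.infix ⟨[(v.1, !v.2)], [], by simp⟩)
      refine ⟨p, c ++ [v], s, by simp, by simp [invRev], ?_⟩
      rw [← hred, List.append_assoc]
      exact reduce.Step.eq (by simpa using Red.Step.not (L₁ := p ++ c) (x := v.1) (b := v.2))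
    · have hVU : IsReduced (V ++ [v] ++ U) := by
        refine List.isChain_append.mpr ⟨hV, hU, fun a ha b hb hab => ?_⟩
        obtain rfl : a = v := by simpa using ha.symm
        by_contra hne
        refine hcancel ⟨U.tail, (List.eq_cons_of_mem_head? hb).trans ?_⟩
        rw [hab, ← Bool.eq_not.mpr (Ne.symm hne)]
      exact ⟨V ++ [v], [], U, by simp, by simp [invRev], hVU.reduce_eq⟩

theorem exists_toWord_mul (x y : FreeGroup α) :
    ∃ p c s, x.toWord = p ++ c ∧ y.toWord = invRev c ++ s ∧ (x * y).toWord = p ++ s := by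
  obtain ⟨p, c, s, hx, hy, hxy⟩ :=
    exists_reduce_append (isReduced_toWord (x := x)) (isReduced_toWord (x := y))
  exact ⟨p, c, s, hx, hy, by rw [toWord_mul, hxy]⟩

theorem prefix_toWord_mul_of_not_prefix {v g : FreeGroup α} {p q : List (α × Bool)}
    (hp : p <+: v.toWord) (hq : q <+: v⁻¹.toWord) (hlen : p.length + q.length ≤ v.toWord.length)
    (hg : ¬ q <+: g.toWord) : p <+: (v * g).toWord := by
  obtain ⟨P, C, s, hv, hgC, hvg⟩ := exists_toWord_mul v g
  rw [toWord_inv, hv, invRev_append] at hq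
  by_cases hC : q.length ≤ C.length
  · refine absurd ?_ hg
    rw [hgC]
    exact (List.prefix_of_prefix_length_le hq (List.prefix_append _ _)
      (by simpa using hC)).trans (List.prefix_append _ _)
  · rw [hvg]
    rw [hv] at hp hlen
    refine (List.prefix_of_prefix_length_le hp (List.prefix_append _ _) ?_).trans
      (List.prefix_append _ _)
    simp only [List.length_append] at hlen
    omega

theorem mem_wordBall_of_norm_le {g : FreeGroup α} {ρ : ℝ} (hg : (g.norm : ℝ) ≤ ρ) :
    g ∈ wordBall (Set.range of) ρ := by
  refine ⟨g.toWord.map fun a => bif a.2 then of a.1 else (of a.1)⁻¹, by simpa [norm] using hg,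
    ?_, ?_⟩
  · simp only [List.mem_map]
    rintro _ ⟨⟨a, _ | _⟩, -, rfl⟩ <;> simp
  · rw [← lift_mk, mk_toWord, lift_of_apply]

theorem norm_map_le_of_mem_wordBall {G : Type*} [Group G] {T : Set G} (f : G →* FreeGroup α)
    {C : ℕ} (hT : ∀ t ∈ T, (f t).norm ≤ C) {g : G} {ρ : ℝ} (hg : g ∈ wordBall T ρ) :
    ((f g).norm : ℝ) ≤ C * ρ := by
  obtain ⟨l, hl, hlT, rfl⟩ := hg
  have hprod : (f l.prod).norm ≤ C * l.length := by
    clear hl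
    induction l with
    | nil => simp
    | cons a l ih =>
      have ha : (f a).norm ≤ C := by
        rcases hlT a List.mem_cons_self with h | h
        · exact hT a h
        · simpa using hT _ h
      rw [List.prod_cons, _root_.map_mul, List.length_cons, mul_add_one]
      exact (norm_mul_le _ _).trans
        (by linarith [ih (fun b hb => hlT b (List.mem_cons_of_mem a hb))])
  calc ((f l.prod).norm : ℝ) ≤ C * l.length := by exact_mod_cast hprod
    _ ≤ C * ρ := by gcongr

end Words

section Retract

variable {α : Type*}

def coprodMulEquivOption : Coprod (FreeGroup α) (Multiplicative ℤ) ≃* FreeGroup (Option α) :=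
  MonoidHom.toMulEquiv (Coprod.lift (map some) (zpowersHom _ (of none)))
    (lift fun o => o.elim (Coprod.inr (Multiplicative.ofAdd 1)) fun a => Coprod.inl (of a))
    (Coprod.hom_ext (ext_hom _ _ fun _ => by simp) (MonoidHom.ext_mint (by simp)))
    (ext_hom _ _ fun o => by cases o <;> simp)

@[simp]
theorem coprodMulEquivOption_inl (g : FreeGroup α) :
    coprodMulEquivOption (Coprod.inl g) = map some g := by
  simp [coprodMulEquivOption]

@[simp]
theorem coprodMulEquivOption_inr_ofAdd_one :
    coprodMulEquivOption (Coprod.inr (Multiplicative.ofAdd 1) : Coprod (FreeGroup α) _) =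
      of none := by
  simp [coprodMulEquivOption]

def retractOption (w : FreeGroup α) : FreeGroup (Option α) →* FreeGroup α :=
  lift fun o => o.elim w of

variable (w : FreeGroup α)

@[simp]
theorem retractOption_of_none : retractOption w (of none) = w := by
  simp [retractOption]

@[simp]
theorem retractOption_of_some (a : α) : retractOption w (of (some a)) = of a := by
  simp [retractOption]

@[simp]
theorem retractOption_map_some (g : FreeGroup α) : retractOption w (map some g) = g := by
  induction g using FreeGroup.induction_on with
  | C1 => simp
  | of a => simp
  | inv_of a _ => simp_all
  | mul g h hg hh => simp_all

theorem retractOption_mk_none_cons (δ : Bool) (L : List (Option α × Bool)) :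
    retractOption w (mk ((none, δ) :: L)) = (bif δ then w else w⁻¹) * retractOption w (mk L) := by
  rw [← List.singleton_append, ← mul_mk, _root_.map_mul]
  cases δ <;> simp [retractOption, lift_mk]

end Retract

/-- Ping-pong data for `retractOption w` up to length `r`: `S true` and `S false` are thought of as
the elements whose reduced words begin like `w` and like `w⁻¹`. -/
structure IsPingPong {α : Type*} [DecidableEq α] (w : FreeGroup α) (r : ℕ)
    (S : Bool → Set (FreeGroup α)) : Prop where
  intro ::
  not_mem_of_norm_le {g : FreeGroup α} {δ : Bool} : g.norm ≤ r → g ∉ S δ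
  eq_one_of_mul_mem {e u : FreeGroup α} {δ δ' : Bool} :
    e.norm ≤ r → u ∈ S δ → e * u ∈ S δ' → e = 1 ∧ δ = δ'
  mul_mem_of_not_mem {g : FreeGroup α} {δ : Bool} :
    g ∉ S (!δ) → (bif δ then w else w⁻¹) * g ∈ S δ

namespace IsPingPong

variable {α : Type*} [DecidableEq α] {w : FreeGroup α} {r : ℕ} {S : Bool → Set (FreeGroup α)}

theorem retractOption_mk_mem (hw : IsPingPong w r S) {δ : Bool} {L : List (Option α × Bool)}
    (hL : IsReduced ((none, δ) :: L)) (hlen : L.length < r) :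
    retractOption w (mk ((none, δ) :: L)) ∈ S δ := by
  induction hn : L.length using Nat.strong_induction_on generalizing δ L with
  | _ n ih =>
    rw [retractOption_mk_none_cons]
    refine hw.mul_mem_of_not_mem fun hmem => ?_
    obtain ⟨ℓ, rfl | ⟨δ', L', rfl⟩⟩ := exists_eq_map_some_append L
    · rw [mk_map_some, retractOption_map_some] at hmem
      exact hw.not_mem_of_norm_le (norm_mk_le.trans (by simpa using hlen.le)) hmem
    · simp only [List.length_append, List.length_map, List.length_cons] at hlen hn
      have hℓ : IsReduced ℓ :=
        (isReduced_map_iff (Option.some_injective α)).mp (hL.infix ⟨[(none, δ)], _, rfl⟩)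
      have hu : retractOption w (mk ((none, δ') :: L')) ∈ S δ' :=
        ih L'.length (by omega)
          (hL.infix ⟨(none, δ) :: ℓ.map fun a => (some a.1, a.2), [], by simp⟩) (by omega) rfl
      rw [← mul_mk, _root_.map_mul, mk_map_some, retractOption_map_some] at hmem
      obtain ⟨hone, rfl⟩ := hw.eq_one_of_mul_mem (norm_mk_le.trans (by omega)) hu hmem
      obtain rfl : ℓ = [] := by simpa [hℓ.reduce_eq] using congrArg toWord hone
      simp at hL

theorem eq_one_of_retractOption_eq_one (hw : IsPingPong w r S) {g : FreeGroup (Option α)}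
    (hg : g.norm ≤ r) (hg1 : retractOption w g = 1) : g = 1 := by
  rw [← mk_toWord (x := g)] at hg1 ⊢
  obtain ⟨ℓ, hL | ⟨δ, L, hL⟩⟩ := exists_eq_map_some_append g.toWord
  · rw [hL, mk_map_some] at hg1 ⊢
    rw [retractOption_map_some] at hg1
    rw [hg1, _root_.map_one]
  · have hlen : g.toWord.length ≤ r := hg
    have hu := hw.retractOption_mk_mem
      (isReduced_toWord.infix ⟨ℓ.map fun a => (some a.1, a.2), [], by rw [hL, List.append_nil]⟩)
      (by simp [hL] at hlen; omega)
    rw [hL, ← mul_mk, _root_.map_mul, mk_map_some, retractOption_map_some] at hg1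
    rw [eq_inv_of_mul_eq_one_right hg1] at hu
    refine absurd hu (hw.not_mem_of_norm_le ?_)
    rw [norm_inv_eq]
    exact norm_mk_le.trans (by simp [hL] at hlen; omega)

theorem injOn_retractOption {m : ℕ} (hw : IsPingPong w (2 * m) S) :
    Set.InjOn (retractOption w) {g | g.norm ≤ m} := by
  intro g hg h hh hgh
  rw [← mul_inv_eq_one]
  refine hw.eq_one_of_retractOption_eq_one ((norm_mul_le _ _).trans ?_)
    (by rw [_root_.map_mul, _root_.map_inv, hgh, mul_inv_cancel])
  rw [norm_inv_eq]
  simp only [Set.mem_ofPred_eq] at hg hh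
  omega

end IsPingPong

section HalfWord

variable {α : Type*}

def halfWord (x y : α) (r : ℕ) (δ : Bool) : List (α × Bool) :=
  (x, δ) :: List.replicate r (y, δ) ++ [(x, δ)]

variable {x y : α} {r : ℕ}

@[simp]
theorem length_halfWord (δ : Bool) : (halfWord x y r δ).length = r + 2 := by
  simp [halfWord]

theorem getElem_halfWord (δ : Bool) {i : ℕ} (hi : i < (halfWord x y r δ).length) :
    (halfWord x y r δ)[i] = (if i = 0 ∨ i = r + 1 then x else y, δ) := by
  have hi' : i < r + 2 := by simpa using hi
  unfold halfWord
  simp only [List.cons_append, List.getElem_cons, List.getElem_append, List.getElem_replicate,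
    List.length_replicate]
  split_ifs <;> simp_all <;> omega

theorem invRev_halfWord (δ : Bool) : invRev (halfWord x y r δ) = halfWord x y r (!δ) := by
  simp [halfWord, invRev]

theorem isReduced_halfWord_append (δ : Bool) :
    IsReduced (halfWord x y r δ ++ halfWord x y r δ) :=
  isReduced_of_forall_snd_eq (δ := δ) (by simp [halfWord, List.mem_replicate]; aesop)

theorem eq_of_drop_halfWord_prefix (hxy : x ≠ y) {δ δ' : Bool} {K j : ℕ} {s : List (α × Bool)}
    (hK : K ≤ r) (hj : j ≤ r) (hK' : (halfWord x y r δ').drop K <+: s)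
    (hj' : (halfWord x y r δ).drop j <+: s) : δ' = δ ∧ K = j := by
  have key : ∀ i, K + i < r + 2 → j + i < r + 2 →
      (if K + i = 0 ∨ K + i = r + 1 then x else y, δ') =
        (if j + i = 0 ∨ j + i = r + 1 then x else y, δ) := fun i hKi hji => by
    have hKi' : i < ((halfWord x y r δ').drop K).length := by simp; omega
    have hji' : i < ((halfWord x y r δ).drop j).length := by simp; omega
    have hsK := hK'.getElem hKi'
    have hsj := hj'.getElem hji'
    rw [List.getElem_drop] at hsK hsj
    rw [← getElem_halfWord δ' (by simpa using hKi), ← getElem_halfWord δ (by simpa using hji),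
      hsK, hsj]
  refine ⟨(Prod.ext_iff.mp (key 0 (by omega) (by omega))).2, ?_⟩
  by_contra hne
  -- the second `x` of the copy shifted further faces a `y` of the other copy
  rcases Nat.lt_or_gt_of_ne hne with h | h
  · have := key (r + 1 - j) (by omega) (by omega)
    simp only [Prod.mk.injEq] at this
    split_ifs at this <;> first | omega | exact hxy this.1.symm
  · have := key (r + 1 - K) (by omega) (by omega)
    simp only [Prod.mk.injEq] at this
    split_ifs at this <;> first | omega | exact hxy this.1

variable [DecidableEq α]

theorem eq_one_of_halfWord_prefix_mul (hxy : x ≠ y) {e u : FreeGroup α} {δ δ' : Bool}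
    (he : e.norm ≤ r) (hu : halfWord x y r δ <+: u.toWord)
    (heu : halfWord x y r δ' <+: (e * u).toWord) : e = 1 ∧ δ = δ' := by
  obtain ⟨p, c, s, he', hu', heu'⟩ := exists_toWord_mul e u
  have hpc : p.length + c.length ≤ r := by simpa [norm, he'] using he
  rw [heu'] at heu
  rw [hu'] at hu
  obtain ⟨hδ, hpc'⟩ := eq_of_drop_halfWord_prefix hxy (r := r) (δ := δ) (δ' := δ') (s := s)
    (K := p.length) (j := c.length) (by omega) (by omega) (by simpa using heu.drop p.length)
    (by simpa using hu.drop c.length)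
  subst δ'
  have hp : p <+: halfWord x y r δ :=
    List.prefix_of_prefix_length_le (List.prefix_append _ _) heu (by simp; omega)
  have hc : invRev c <+: halfWord x y r δ :=
    List.prefix_of_prefix_length_le (List.prefix_append _ _) hu (by simp; omega)
  have hcp : c = invRev p := by
    rw [(List.prefix_of_prefix_length_le hp hc (by simp [hpc'])).eq_of_length (by simp [hpc']),
      invRev_invRev]
  rw [hcp] at he'
  obtain rfl := eq_nil_of_isReduced_append_invRev (he' ▸ isReduced_toWord)
  exact ⟨toWord_eq_nil_iff.mp (by simpa [invRev] using he'), rfl⟩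

def pingPongWord (x y : α) (r : ℕ) : FreeGroup α :=
  mk (halfWord x y r true ++ halfWord x y r true)

theorem toWord_cond_pingPongWord (δ : Bool) :
    (bif δ then pingPongWord x y r else (pingPongWord x y r)⁻¹).toWord =
      halfWord x y r δ ++ halfWord x y r δ := by
  have hmk : (bif δ then pingPongWord x y r else (pingPongWord x y r)⁻¹) =
      mk (halfWord x y r δ ++ halfWord x y r δ) := by
    cases δ <;> simp [pingPongWord, inv_mk, invRev_append, invRev_halfWord]
  rw [hmk, toWord_mk, (isReduced_halfWord_append δ).reduce_eq]

theorem norm_pingPongWord : (pingPongWord x y r).norm = 2 * r + 4 := by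
  have h := congrArg List.length (toWord_cond_pingPongWord (x := x) (y := y) (r := r) true)
  simp only [cond_true, List.length_append, length_halfWord] at h
  rw [norm, h]
  ring

theorem isPingPong_pingPongWord (hxy : x ≠ y) :
    IsPingPong (pingPongWord x y r) r fun δ => {g | halfWord x y r δ <+: g.toWord} where
  not_mem_of_norm_le {g δ} hg hpre := by
    have := hpre.length_le
    simp only [length_halfWord] at this
    exact absurd hg (by unfold norm; omega)
  eq_one_of_mul_mem he hu heu := eq_one_of_halfWord_prefix_mul hxy he hu heu
  mul_mem_of_not_mem {g δ} hg := by
    have hinv : (bif δ then pingPongWord x y r else (pingPongWord x y r)⁻¹)⁻¹ =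
        bif !δ then pingPongWord x y r else (pingPongWord x y r)⁻¹ := by
      cases δ <;> simp
    refine prefix_toWord_mul_of_not_prefix (q := halfWord x y r (!δ)) ?_ ?_ ?_ hg
    · rw [toWord_cond_pingPongWord]
      exact List.prefix_append _ _
    · rw [hinv, toWord_cond_pingPongWord]
      exact List.prefix_append _ _
    · simp [toWord_cond_pingPongWord]

end HalfWord

end FreeGroup

open Topology in
theorem tendsto_sq_two_mul_add_two_rpow_inv :
    Tendsto (fun n : ℕ => ((2 * n + 2 : ℝ) ^ 2) ^ (n : ℝ)⁻¹) atTop (𝓝 1) := by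
  have hlin : Tendsto (fun n : ℕ => (2 * n + 2 : ℝ)) atTop atTop :=
    tendsto_atTop_add_const_right _ _
      (tendsto_natCast_atTop_atTop.const_mul_atTop (by norm_num : (0 : ℝ) < 2))
  refine ((tendsto_rpow_div_mul_add 4 1 (-2) one_ne_zero.symm).comp hlin).congr' ?_
  filter_upwards [eventually_ge_atTop 1] with n hn
  have hn' : (n : ℝ) ≠ 0 := by positivity
  rw [Function.comp_apply, ← Real.rpow_natCast, ← Real.rpow_mul (by positivity)]
  congr 1
  rw [show (1 : ℝ) * (2 * n + 2) + -2 = 2 * n by ring]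
  field_simp
  norm_num

theorem FreeGroup.isSelfless_of_ne {α : Type*} {x y : α} (hxy : x ≠ y) :
    IsSelfless (FreeGroup α) (Set.range of) := by
  classical
  refine ⟨fun m => (2 * m + 2) ^ 2, fun m => by positivity,
    tendsto_sq_two_mul_add_two_rpow_inv.liminf_eq, fun m _ => ?_⟩
  let w := pingPongWord x y (2 * m)
  let φ := (retractOption w).comp (coprodMulEquivOption (α := α)).toMonoidHom
  refine ⟨φ, fun g => ⟨Coprod.inl g, by simp [φ]⟩, fun g => by simp [φ], ?_, ?_⟩
  · have hball : Set.MapsTo coprodMulEquivOption (wordBall (Coprod.inl '' Set.range of ∪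
        {Coprod.inr (Multiplicative.ofAdd 1)}) m) {g | g.norm ≤ m} := fun z hz => by
      have := norm_map_le_of_mem_wordBall (coprodMulEquivOption (α := α)).toMonoidHom (C := 1)
        (by rintro _ (⟨_, ⟨i, rfl⟩, rfl⟩ | rfl) <;> simp) hz
      simpa using this
    exact (isPingPong_pingPongWord hxy).injOn_retractOption.comp
      coprodMulEquivOption.injective.injOn hball
  · rintro _ ⟨z, hz, rfl⟩
    refine mem_wordBall_of_norm_le ?_
    have := norm_map_le_of_mem_wordBall φ (C := 4 * m + 4)
      (by rintro _ (⟨_, ⟨i, rfl⟩, rfl⟩ | rfl) <;> simp [φ, w, norm_pingPongWord]; omega) hz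
    refine this.trans ?_
    push_cast
    nlinarith

/-- For every `n ≥ 2`, the free group `F_n` is selfless with respect to its standard
free generating set. -/
theorem freeGroup_isSelfless (n : ℕ) (hn : 2 ≤ n) :
    IsSelfless (FreeGroup (Fin n)) (Set.range (FreeGroup.of : Fin n → FreeGroup (Fin n))) :=
  FreeGroup.isSelfless_of_ne (x := ⟨0, by omega⟩) (y := ⟨1, by omega⟩) (by simp)
end

section
/- Let G and H be groups with subsets X ⊆ G and Y ⊆ H, let g ∈ G have infinite order, let n ≥ 1, and let h ∈ H satisfy h ∉ B_Y(2n). In the free product G ∗ H, equipped with the subset given by the images of X and Y, suppose m ≥ 2, s_1, …, s_m ∈ B_{X∪Y}(2n) with s_i ≠ 1 for all i with 1 < i < m, and p_1, …, p_{m−1} are nonzero integers. Then s_1·(h g^{p_1} h⁻¹)·s_2·(h g^{p_2} h⁻¹)⋯s_{m−1}·(h g^{p_{m−1}} h⁻¹)·s_m ≠ 1 in G ∗ H, where g and h denote the images of g and h in G ∗ H. -/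
/-!
Transport `G ∗ H` to an indexed free product and argue with reduced words. A product of at most
`r` generators has a reduced word whose `H`-letters lie in `B_Y(r)`; as `h ∉ B_Y(r)`, multiplying
such a word by `h^{±1}` cannot cancel the adjacent `H`-letter. So `s h` is a nonempty reduced word
ending in `H`, `h⁻¹ s` one starting in `H`, and `h⁻¹ s h` (for `s ≠ 1`) one starting and ending
in `H`, while `g^p` (`p ≠ 0`) is a single `G`-letter. Grouping the product as
`(s₁ h) g^{p₁} (h⁻¹ s₂ h) g^{p₂} ⋯ g^{p_{m-1}} (h⁻¹ s_m)` makes it a concatenation of reduced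
words whose factors alternate at every seam, hence a nonempty reduced word, hence `≠ 1`.
-/

open Filter Monoid

section WordBall

variable {K : Type*} [Group K] {T T' : Set K} {r r' : ℝ} {x y : K}

lemma wordBall_mono (hr : r ≤ r') : wordBall T r ⊆ wordBall T r' := by
  rintro _ ⟨l, hl, hlT, rfl⟩
  exact ⟨l, hl.trans hr, hlT, rfl⟩

lemma wordBall_mono_set (hT : T ⊆ T') : wordBall T r ⊆ wordBall T' r := by
  rintro _ ⟨l, hl, hlT, rfl⟩
  exact ⟨l, hl, fun x hx => (hlT x hx).imp (@hT _) (@hT _), rfl⟩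

lemma one_mem_wordBall (hr : 0 ≤ r) : (1 : K) ∈ wordBall T r :=
  ⟨[], by simpa using hr, by simp, rfl⟩

lemma inv_mem_wordBall (hx : x ∈ wordBall T r) : x⁻¹ ∈ wordBall T r := by
  obtain ⟨l, hl, hlT, rfl⟩ := hx
  refine ⟨(l.map (·⁻¹)).reverse, by simpa using hl, ?_, (List.prod_inv_reverse l).symm⟩
  simp only [List.mem_reverse, List.mem_map, forall_exists_index, and_imp]
  rintro _ a ha rfl
  simpa [or_comm] using hlT a ha

lemma mul_mem_wordBall_succ (hy : y ∈ T ∨ y⁻¹ ∈ T) (hx : x ∈ wordBall T r) :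
    y * x ∈ wordBall T (r + 1) := by
  obtain ⟨l, hl, hlT, rfl⟩ := hx
  refine ⟨y :: l, by push_cast [List.length_cons]; linarith, ?_, List.prod_cons⟩
  simpa [hy] using hlT

lemma mem_wordBall_succ (hy : y ∈ T ∨ y⁻¹ ∈ T) (hr : 0 ≤ r) : y ∈ wordBall T (r + 1) :=
  mul_one y ▸ mul_mem_wordBall_succ hy (one_mem_wordBall hr)

lemma ne_one_of_notMem_wordBall (hr : 0 ≤ r) (hy : y ∉ wordBall T r) : y ≠ 1 :=
  fun h => hy (h ▸ one_mem_wordBall hr)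

lemma inv_notMem_wordBall (hy : y ∉ wordBall T r) : y⁻¹ ∉ wordBall T r :=
  fun h => hy (inv_inv y ▸ inv_mem_wordBall h)

lemma mul_ne_one_of_notMem_wordBall (hy : y ∉ wordBall T r) (hx : x ∈ wordBall T r) :
    y * x ≠ 1 :=
  fun h => hy (inv_eq_of_mul_eq_one_left h ▸ inv_mem_wordBall hx)

lemma mul_ne_one_of_notMem_wordBall' (hy : y ∉ wordBall T r) (hx : x ∈ wordBall T r) :
    x * y ≠ 1 :=
  fun h => hy (inv_eq_of_mul_eq_one_right h ▸ inv_mem_wordBall hx)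

end WordBall

namespace Monoid.Coprod

open CoprodI

universe u v

variable (G : Type u) (H : Type v)

/-- Reduced words are available for `CoprodI`, so `G ∗ H` is identified with the free product of
this `Bool`-indexed family; `ULift` puts both factors in one universe. -/
abbrev Summand : Bool → Type (max u v) := fun b => cond b (ULift.{v} G) (ULift.{u} H)

variable {G H} in
def HLettersIn (S : Set H) (l : List (Σ b, Summand G H b)) : Prop :=
  ∀ c : ULift H, (⟨false, c⟩ : Σ b, Summand G H b) ∈ l → c.down ∈ S

variable {G H} in
lemma HLettersIn.mono {S S' : Set H} {l : List (Σ b, Summand G H b)} (hl : HLettersIn S l)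
    (hS : S ⊆ S') : HLettersIn S' l := fun c hc => hS (hl c hc)

variable [Group G] [Group H]

instance : ∀ b, Group (Summand G H b)
  | true => inferInstanceAs (Group (ULift G))
  | false => inferInstanceAs (Group (ULift H))

noncomputable instance (b : Bool) : DecidableEq (Summand G H b) := Classical.decEq _

def Summand.ofLeft : G ≃* Summand G H true := MulEquiv.ulift.symm

def Summand.ofRight : H ≃* Summand G H false := MulEquiv.ulift.symm

def toCoprodI : Coprod G H →* CoprodI (Summand G H) :=
  Coprod.lift ((of (i := true)).comp (Summand.ofLeft G H).toMonoidHom)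
    ((of (i := false)).comp (Summand.ofRight G H).toMonoidHom)

def ofCoprodI : CoprodI (Summand G H) →* Coprod G H :=
  CoprodI.lift fun
    | true => inl.comp (Summand.ofLeft G H).symm.toMonoidHom
    | false => inr.comp (Summand.ofRight G H).symm.toMonoidHom

variable {G H}

@[simp] lemma toCoprodI_inl (a : G) : toCoprodI G H (inl a) = of (Summand.ofLeft G H a) :=
  Coprod.lift_apply_inl _ _ a

@[simp] lemma toCoprodI_inr (y : H) : toCoprodI G H (inr y) = of (Summand.ofRight G H y) :=
  Coprod.lift_apply_inr _ _ y

lemma leftInverse_ofCoprodI_toCoprodI : Function.LeftInverse (ofCoprodI G H) (toCoprodI G H) :=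
  DFunLike.congr_fun (f := (ofCoprodI G H).comp (toCoprodI G H)) (g := MonoidHom.id _)
    (Coprod.hom_ext (MonoidHom.ext fun a => by simp [ofCoprodI])
      (MonoidHom.ext fun y => by simp [ofCoprodI]))

lemma toCoprodI_injective : Function.Injective (toCoprodI G H) :=
  leftInverse_ofCoprodI_toCoprodI.injective

variable {Y : Set H} {r : ℝ}

lemma HLettersIn.of_smul_inl {S : Set H} {w : Word (Summand G H)} (hw : HLettersIn S w.toList)
    (a : G) : HLettersIn S (toCoprodI G H (inl a) • w).toList := by
  rw [toCoprodI_inl]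
  exact fun c hc => hw c ((Word.mem_smul_iff_of_ne Bool.false_ne_true).1 hc)

lemma HLettersIn.of_smul_inr {w : Word (Summand G H)} (hw : HLettersIn (wordBall Y r) w.toList)
    (hr : 0 ≤ r) {y : H} (hy : y ∈ Y ∨ y⁻¹ ∈ Y) :
    HLettersIn (wordBall Y (r + 1)) (toCoprodI G H (inr y) • w).toList := by
  intro c hc
  rw [toCoprodI_inr] at hc
  rcases Word.mem_smul_iff.1 hc with ⟨hne, -⟩ | ⟨-, -, hc | ⟨c', hc', rfl⟩ | ⟨-, rfl⟩⟩
  · exact absurd rfl hne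
  · exact wordBall_mono (by linarith) (hw c (List.mem_of_mem_tail hc))
  · exact mul_mem_wordBall_succ hy (hw c' (List.mem_of_mem_head? hc'))
  · exact mem_wordBall_succ hy hr

lemma eq_inl_or_eq_inr_of_mem_gens {x : Coprod G H}
    (hx : x ∈ Set.range inl ∪ inr '' Y ∨ x⁻¹ ∈ Set.range inl ∪ inr '' Y) :
    (∃ a, x = inl a) ∨ ∃ y, (y ∈ Y ∨ y⁻¹ ∈ Y) ∧ x = inr y := by
  rcases hx with (⟨a, rfl⟩ | ⟨y, hy, rfl⟩) | (⟨a, ha⟩ | ⟨y, hy, hyx⟩)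
  · exact .inl ⟨a, rfl⟩
  · exact .inr ⟨y, .inl hy, rfl⟩
  · exact .inl ⟨a⁻¹, by rw [map_inv, ha, inv_inv]⟩
  · exact .inr ⟨y⁻¹, .inr (by rwa [inv_inv]), by rw [map_inv, hyx, inv_inv]⟩

lemma hLettersIn_equiv_toCoprodI_prod (l : List (Coprod G H))
    (hl : ∀ x ∈ l, x ∈ Set.range inl ∪ inr '' Y ∨ x⁻¹ ∈ Set.range inl ∪ inr '' Y) :
    HLettersIn (wordBall Y l.length) (Word.equiv (toCoprodI G H l.prod)).toList := by
  induction l with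
  | nil => simp [HLettersIn, Word.equiv, Word.empty]
  | cons x l ih =>
    have hl' := ih fun z hz => hl z (List.mem_cons_of_mem _ hz)
    simp only [List.prod_cons, map_mul, Word.equiv, Equiv.coe_fn_mk, mul_smul, List.length_cons,
      Nat.cast_succ] at hl' ⊢
    rcases eq_inl_or_eq_inr_of_mem_gens (hl x List.mem_cons_self) with ⟨a, rfl⟩ | ⟨y, hy, rfl⟩
    · exact (hl'.of_smul_inl a).mono (wordBall_mono (by linarith))
    · exact hl'.of_smul_inr (Nat.cast_nonneg _) hy

lemma hLettersIn_equiv_toCoprodI {s : Coprod G H}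
    (hs : s ∈ wordBall (Set.range inl ∪ inr '' Y) r) :
    HLettersIn (wordBall Y r) (Word.equiv (toCoprodI G H s)).toList := by
  obtain ⟨l, hl, hlT, rfl⟩ := hs
  exact (hLettersIn_equiv_toCoprodI_prod l hlT).mono (wordBall_mono hl)

lemma exists_neWord_eq_toCoprodI {S : Set H} {x : Coprod G H} (hx : x ≠ 1)
    (hs : HLettersIn S (Word.equiv (toCoprodI G H x)).toList) :
    ∃ i j, ∃ w : NeWord (Summand G H) i j, HLettersIn S w.toList ∧ w.prod = toCoprodI G H x := by
  have hne : Word.equiv (toCoprodI G H x) ≠ Word.empty := fun h => hx <| toCoprodI_injective <| by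
    rw [map_one, ← Word.prod_empty, ← h]
    exact (Word.equiv.symm_apply_apply _).symm
  obtain ⟨i, j, w, hw⟩ := NeWord.of_word _ hne
  refine ⟨i, j, w, by rwa [← hw] at hs, ?_⟩
  rw [NeWord.prod, hw]
  exact Word.equiv.symm_apply_apply _

variable {c : H}

lemma exists_neWord_inr_mul {i j} (w : NeWord (Summand G H) i j)
    (hw : HLettersIn (wordBall Y r) w.toList) (hr : 0 ≤ r) (hc : c ∉ wordBall Y r) :
    ∃ w' : NeWord (Summand G H) false j, w'.prod = toCoprodI G H (inr c) * w.prod := by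
  have hc1 : Summand.ofRight G H c ≠ 1 :=
    (MulEquiv.map_ne_one_iff _).2 (ne_one_of_notMem_wordBall hr hc)
  induction w with
  | @singleton i x hx =>
    cases i
    · have hcx : Summand.ofRight G H c * x ≠ 1 := fun h =>
        mul_ne_one_of_notMem_wordBall hc (hw x (by simp)) (congrArg ULift.down h)
      exact ⟨.singleton _ hcx, by simp⟩
    · exact ⟨.append (.singleton _ hc1) Bool.false_ne_true (.singleton x hx), by simp⟩
  | append w₁ hne w₂ ih₁ _ =>
    obtain ⟨w₁', hw₁'⟩ := ih₁ fun c hc => hw c (List.mem_append_left _ hc)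
    exact ⟨.append w₁' hne w₂, by simp [hw₁', mul_assoc]⟩

lemma exists_neWord_mul_inr {i j} (w : NeWord (Summand G H) i j)
    (hw : HLettersIn (wordBall Y r) w.toList) (hr : 0 ≤ r) (hc : c ∉ wordBall Y r) :
    ∃ w' : NeWord (Summand G H) i false, w'.prod = w.prod * toCoprodI G H (inr c) := by
  have hc1 : Summand.ofRight G H c ≠ 1 :=
    (MulEquiv.map_ne_one_iff _).2 (ne_one_of_notMem_wordBall hr hc)
  induction w with
  | @singleton j x hx =>
    cases j
    · have hxc : x * Summand.ofRight G H c ≠ 1 := fun h =>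
        mul_ne_one_of_notMem_wordBall' hc (hw x (by simp)) (congrArg ULift.down h)
      exact ⟨.singleton _ hxc, by simp⟩
    · exact ⟨.append (.singleton x hx) Bool.false_ne_true.symm (.singleton _ hc1), by simp⟩
  | append w₁ hne w₂ _ ih₂ =>
    obtain ⟨w₂', hw₂'⟩ := ih₂ fun c hc => hw c (List.mem_append_right _ hc)
    exact ⟨.append w₁ hne w₂', by simp [hw₂', mul_assoc]⟩

lemma exists_neWord_conj_inr {i j} (w : NeWord (Summand G H) i j)
    (hw : HLettersIn (wordBall Y r) w.toList) (hr : 0 ≤ r) (hc : c ∉ wordBall Y r) :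
    ∃ w' : NeWord (Summand G H) false false,
      w'.prod = (toCoprodI G H (inr c))⁻¹ * w.prod * toCoprodI G H (inr c) := by
  cases w with
  | @singleton i x hx =>
    cases i
    · have hcxc : (Summand.ofRight G H c)⁻¹ * x * Summand.ofRight G H c ≠ 1 := by
        rwa [Ne, mul_eq_one_iff_eq_inv, mul_eq_left]
      exact ⟨.singleton _ hcxc, by simp [mul_assoc]⟩
    · have hc1 : Summand.ofRight G H c ≠ 1 :=
        (MulEquiv.map_ne_one_iff _).2 (ne_one_of_notMem_wordBall hr hc)
      exact ⟨.append (.singleton _ (inv_ne_one.2 hc1)) Bool.false_ne_true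
        (.append (.singleton x hx) Bool.false_ne_true.symm (.singleton _ hc1)), by simp [mul_assoc]⟩
  | append w₁ hne w₂ =>
    obtain ⟨w₁', hw₁'⟩ := exists_neWord_inr_mul w₁
      (fun c hc => hw c (List.mem_append_left _ hc)) hr (inv_notMem_wordBall hc)
    obtain ⟨w₂', hw₂'⟩ := exists_neWord_mul_inr w₂
      (fun c hc => hw c (List.mem_append_right _ hc)) hr hc
    exact ⟨.append w₁' hne w₂', by simp [hw₁', hw₂', mul_assoc]⟩

def HasNeWord (i j : Bool) (x : Coprod G H) : Prop :=
  ∃ w : NeWord (Summand G H) i j, w.prod = toCoprodI G H x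

lemma HasNeWord.ne_one {i j : Bool} {x : Coprod G H} (hx : HasNeWord i j x) : x ≠ 1 := by
  rintro rfl
  obtain ⟨w, hw⟩ := hx
  have : w.toWord = Word.empty :=
    Word.equiv.symm.injective (hw.trans ((map_one _).trans Word.prod_empty.symm))
  exact w.toList_ne_nil (congrArg Word.toList this)

lemma HasNeWord.mul {i j k l : Bool} {x y : Coprod G H} (hx : HasNeWord i j x)
    (hy : HasNeWord k l y) (hjk : j ≠ k) : HasNeWord i l (x * y) := by
  obtain ⟨w₁, hw₁⟩ := hx
  obtain ⟨w₂, hw₂⟩ := hy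
  exact ⟨.append w₁ hjk w₂, by rw [NeWord.append_prod, hw₁, hw₂, map_mul]⟩

lemma HasNeWord.inv {i j : Bool} {x : Coprod G H} (hx : HasNeWord i j x) : HasNeWord j i x⁻¹ :=
  let ⟨w, hw⟩ := hx
  ⟨w.inv, by rw [NeWord.inv_prod, hw, map_inv]⟩

lemma hasNeWord_inl {a : G} (ha : a ≠ 1) : HasNeWord true true (inl a : Coprod G H) :=
  ⟨.singleton (Summand.ofLeft G H a) ((MulEquiv.map_ne_one_iff _).2 ha), by simp⟩

lemma hasNeWord_inr {c : H} (hc : c ≠ 1) : HasNeWord false false (inr c : Coprod G H) :=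
  ⟨.singleton (Summand.ofRight G H c) ((MulEquiv.map_ne_one_iff _).2 hc), by simp⟩

variable {s : Coprod G H} {h : H}

lemma hasNeWord_mul_inr (hs : s ∈ wordBall (Set.range inl ∪ inr '' Y) r)
    (hr : 0 ≤ r) (hh : h ∉ wordBall Y r) : ∃ i, HasNeWord i false (s * inr h) := by
  by_cases hs1 : s = 1
  · refine ⟨false, ?_⟩
    rw [hs1, one_mul]
    exact hasNeWord_inr (ne_one_of_notMem_wordBall hr hh)
  obtain ⟨i, j, w, hw, hws⟩ := exists_neWord_eq_toCoprodI hs1 (hLettersIn_equiv_toCoprodI hs)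
  obtain ⟨w', hw'⟩ := exists_neWord_mul_inr w hw hr hh
  exact ⟨i, w', by rw [hw', hws, map_mul]⟩

lemma hasNeWord_inr_inv_mul (hs : s ∈ wordBall (Set.range inl ∪ inr '' Y) r)
    (hr : 0 ≤ r) (hh : h ∉ wordBall Y r) : ∃ j, HasNeWord false j ((inr h)⁻¹ * s) := by
  obtain ⟨j, hj⟩ := hasNeWord_mul_inr (inv_mem_wordBall hs) hr hh
  exact ⟨j, by simpa using hj.inv⟩

lemma hasNeWord_inr_inv_mul_mul_inr (hs : s ∈ wordBall (Set.range inl ∪ inr '' Y) r)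
    (hs1 : s ≠ 1) (hr : 0 ≤ r) (hh : h ∉ wordBall Y r) :
    HasNeWord false false ((inr h)⁻¹ * s * inr h) := by
  obtain ⟨i, j, w, hw, hws⟩ := exists_neWord_eq_toCoprodI hs1 (hLettersIn_equiv_toCoprodI hs)
  obtain ⟨w', hw'⟩ := exists_neWord_conj_inr w hw hr hh
  exact ⟨w', by rw [hw', hws, map_mul, map_mul, map_inv]⟩

lemma hasNeWord_prod_mul_inr {s : ℕ → Coprod G H} {a : ℕ → G} {h : H} {k : ℕ} (hk : 1 ≤ k)
    (hs : ∀ i, 1 ≤ i → i ≤ k → s i ∈ wordBall (Set.range inl ∪ inr '' Y) r)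
    (hs' : ∀ i, 1 < i → i ≤ k → s i ≠ 1) (ha : ∀ i, 1 ≤ i → i ≤ k → a i ≠ 1)
    (hr : 0 ≤ r) (hh : h ∉ wordBall Y r) :
    ∃ i, HasNeWord i true
      (((List.range k).map fun i => s (i + 1) * (inr h * inl (a (i + 1)) * (inr h)⁻¹)).prod *
        inr h) := by
  induction k, hk using Nat.le_induction with
  | base =>
    obtain ⟨i, hi⟩ := hasNeWord_mul_inr (hs 1 le_rfl le_rfl) hr hh
    refine ⟨i, ?_⟩
    simpa [mul_assoc] using hi.mul (hasNeWord_inl (ha 1 le_rfl le_rfl)) Bool.false_ne_true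
  | succ k hk ih =>
    obtain ⟨i, hi⟩ := ih (fun j hj hjk => hs j hj (by omega)) (fun j hj hjk => hs' j hj (by omega))
      (fun j hj hjk => ha j hj (by omega))
    have hconj := hasNeWord_inr_inv_mul_mul_inr (hs (k + 1) (by omega) le_rfl)
      (hs' (k + 1) (by omega) le_rfl) hr hh
    refine ⟨i, ?_⟩
    convert (hi.mul hconj Bool.false_ne_true.symm).mul
      (hasNeWord_inl (ha (k + 1) (by omega) le_rfl)) Bool.false_ne_true using 1
    simp only [List.prod_range_succ]
    group

end Monoid.Coprod

open Monoid.Coprod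

theorem freeProduct_word_nontrivial_general {G H : Type*} [Group G] [Group H]
    (X : Set G) (Y : Set H) (g : G) (hg : ¬ IsOfFinOrder g)
    (n : ℕ) (h : H) (hh : h ∉ wordBall Y (2 * n))
    (m : ℕ) (hm : 2 ≤ m)
    (s : ℕ → Coprod G H)
    (hs : ∀ i, 1 ≤ i → i ≤ m →
      s i ∈ wordBall ((⇑(Coprod.inl : G →* Coprod G H)) '' X ∪
        (⇑(Coprod.inr : H →* Coprod G H)) '' Y) (2 * n))
    (hs' : ∀ i, 1 < i → i < m → s i ≠ 1)
    (p : ℕ → ℤ) (hp : ∀ i, 1 ≤ i → i ≤ m - 1 → p i ≠ 0) :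
    ((List.range (m - 1)).map (fun i =>
        s (i + 1) * (Coprod.inr h * (Coprod.inl g : Coprod G H) ^ (p (i + 1)) *
          (Coprod.inr h : Coprod G H)⁻¹))).prod * s m ≠ 1 := by
  have hr : (0 : ℝ) ≤ 2 * n := by positivity
  have hball i (hi : 1 ≤ i) (him : i ≤ m) :
      s i ∈ wordBall (Set.range Coprod.inl ∪ Coprod.inr '' Y) (2 * n) :=
    wordBall_mono_set (Set.union_subset_union_left _ (Set.image_subset_range _ _)) (hs i hi him)
  have hgp i (hi : 1 ≤ i) (him : i ≤ m - 1) : g ^ p i ≠ 1 := fun h1 =>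
    hg (isOfFinOrder_iff_zpow_eq_one.2 ⟨p i, hp i hi him, h1⟩)
  obtain ⟨i, hi⟩ := hasNeWord_prod_mul_inr (a := fun i => g ^ p i) (k := m - 1) (by omega)
    (fun i hi him => hball i hi (by omega)) (fun i hi him => hs' i hi (by omega)) hgp hr hh
  obtain ⟨j, hj⟩ := hasNeWord_inr_inv_mul (hball m (by omega) le_rfl) hr hh
  convert (hi.mul hj Bool.false_ne_true.symm).ne_one using 1
  simp only [map_zpow]
  group

/-- Key freeness lemma in a free product `G ∗ H`: if `g ∈ G` has infinite order,
`h ∈ H` lies outside the ball `B_Y(2n)`, the `sᵢ ∈ G ∗ H` lie in the ball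
`B_{X∪Y}(2n)` (images of `X ⊆ G` and `Y ⊆ H`) with `sᵢ ≠ 1` for `1 < i < m`, and the
`pᵢ` are nonzero integers, then
`s₁·(h g^{p₁} h⁻¹)·s₂·(h g^{p₂} h⁻¹) ⋯ s_{m-1}·(h g^{p_{m-1}} h⁻¹)·s_m ≠ 1`. -/
theorem freeProduct_word_nontrivial {G H : Type*} [Group G] [Group H]
    (X : Set G) (Y : Set H) (g : G) (hg : ¬ IsOfFinOrder g)
    (n : ℕ) (hn : 1 ≤ n) (h : H) (hh : h ∉ wordBall Y (2 * n))
    (m : ℕ) (hm : 2 ≤ m)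
    (s : ℕ → Coprod G H)
    (hs : ∀ i, 1 ≤ i → i ≤ m →
      s i ∈ wordBall ((⇑(Coprod.inl : G →* Coprod G H)) '' X ∪
        (⇑(Coprod.inr : H →* Coprod G H)) '' Y) (2 * n))
    (hs' : ∀ i, 1 < i → i < m → s i ≠ 1)
    (p : ℕ → ℤ) (hp : ∀ i, 1 ≤ i → i ≤ m - 1 → p i ≠ 0) :
    ((List.range (m - 1)).map (fun i =>
        s (i + 1) * (Coprod.inr h * (Coprod.inl g : Coprod G H) ^ (p (i + 1)) *
          (Coprod.inr h : Coprod G H)⁻¹))).prod * s m ≠ 1 :=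
  freeProduct_word_nontrivial_general X Y g hg n h hh m hm s hs hs' p hp
end

section
/- Let G be a countable group, Γ a countable group, and ι : G → Γ an injective group homomorphism such that Γ is existentially C*-residually-G with respect to ι. Then there exist a nonprincipal ultrafilter U on ℕ and group homomorphisms φ_k : Γ → G (k ∈ ℕ) with φ_k ∘ ι = id_G for all k, such that for every z ∈ ℂΓ the limsup along U of the bounded sequence (‖φ_k(z)‖)_{k∈ℕ} is at most ‖z‖, where the norms are the reduced operator norms on ℂG and ℂΓ respectively. -/
open Filter Monoid

/-- The ℓ¹-norm on the complex group algebra. -/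
noncomputable def groupAlgNorm1 {Γ : Type*} [Group Γ] (x : MonoidAlgebra ℂ Γ) : ℝ :=
  ∑ g ∈ x.coeff.support, ‖x.coeff g‖

/-- The ℓ²-norm on the complex group algebra. -/
noncomputable def groupAlgNorm2 {Γ : Type*} [Group Γ] (x : MonoidAlgebra ℂ Γ) : ℝ :=
  Real.sqrt (∑ g ∈ x.coeff.support, (‖x.coeff g‖) ^ 2)

/-- The reduced operator norm on the complex group algebra:
`‖x‖ = sup {‖x·y‖₂ : y ∈ ℂΓ, ‖y‖₂ ≤ 1}`. -/
noncomputable def groupAlgOpNorm {Γ : Type*} [Group Γ] (x : MonoidAlgebra ℂ Γ) : ℝ :=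
  sSup {r : ℝ | ∃ y : MonoidAlgebra ℂ Γ, groupAlgNorm2 y ≤ 1 ∧ r = groupAlgNorm2 (x * y)}

/-- The linear extension of a group homomorphism `φ : Γ → G` to `ℂΓ → ℂG`. -/
noncomputable def groupAlgMap {Γ G : Type*} [Group Γ] [Group G] (φ : Γ →* G)
    (x : MonoidAlgebra ℂ Γ) : MonoidAlgebra ℂ G :=
  MonoidAlgebra.ofCoeff (Finsupp.mapDomain φ x.coeff)

/-- `(G, X)` has the rapid decay property with polynomial `P` if `‖b‖ ≤ P(r)·‖b‖₂`
for every `r ∈ ℕ` and every `b ∈ ℂG` supported on `B_X(r)`. -/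
def RapidDecayWith {G : Type*} [Group G] (X : Set G) (P : Polynomial ℝ) : Prop :=
  ∀ r : ℕ, ∀ b : MonoidAlgebra ℂ G, (↑b.coeff.support : Set G) ⊆ wordBall X r →
    groupAlgOpNorm b ≤ P.eval (r : ℝ) * groupAlgNorm2 b

/-- `(G, X)` has the rapid decay property. -/
def RapidDecay {G : Type*} [Group G] (X : Set G) : Prop :=
  ∃ P : Polynomial ℝ, RapidDecayWith X P

/-- Given `ι : G → Γ`, the group `Γ` is *existentially C*-residually-`G`* if for every
finite `S ⊆ Γ` and `ε > 0` there is a homomorphism `φ : Γ → G` with `φ ∘ ι = id_G` and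
`‖φ(z)‖ ≤ ‖z‖ + ε` for every `z ∈ ℂΓ` supported on `S` with `‖z‖₁ = 1`. -/
def ExistentiallyCstarResidually {G Γ : Type*} [Group G] [Group Γ] (ι : G →* Γ) : Prop :=
  ∀ S : Finset Γ, ∀ ε : ℝ, 0 < ε →
    ∃ φ : Γ →* G, (∀ g : G, φ (ι g) = g) ∧
      ∀ z : MonoidAlgebra ℂ Γ, (↑z.coeff.support : Set Γ) ⊆ (↑S : Set Γ) →
        groupAlgNorm1 z = 1 →
        groupAlgOpNorm (groupAlgMap φ z) ≤ groupAlgOpNorm z + ε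

/-!
Exhaust `Γ` by finite sets `S₀ ⊆ S₁ ⊆ ⋯` and let `φₖ` be the homomorphism the definition
provides for `S = Sₖ` and `ε = 1/(k+1)`. By homogeneity of the three norms the bound extends from
`‖z‖₁ = 1` to `‖φₖ z‖ ≤ ‖z‖ + ‖z‖₁/(k+1)`, and it applies to a fixed `z` as soon as
`supp z ⊆ Sₖ`, i.e. for all large `k`. A bound holding for all large `k` holds along every
nonprincipal ultrafilter, so any one of them, say the hyperfilter, works.
-/

open Topology

section GroupAlgebraNorms

open Pointwise

variable {Γ : Type*} [Group Γ]

lemma groupAlgNorm1_smul (c : ℂ) (x : MonoidAlgebra ℂ Γ) :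
    groupAlgNorm1 (c • x) = ‖c‖ * groupAlgNorm1 x := by
  rcases eq_or_ne c 0 with rfl | hc
  · simp [groupAlgNorm1]
  · rw [groupAlgNorm1, groupAlgNorm1, MonoidAlgebra.coeff_smul, Finsupp.support_smul_eq hc,
      Finset.mul_sum]
    simp only [Finsupp.smul_apply, smul_eq_mul, norm_mul]

lemma groupAlgNorm1_pos {x : MonoidAlgebra ℂ Γ} (hx : x ≠ 0) : 0 < groupAlgNorm1 x := by
  obtain ⟨g, hg⟩ : x.coeff.support.Nonempty :=
    Finsupp.support_nonempty_iff.2 (mt MonoidAlgebra.coeff_eq_zero.1 hx)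
  exact Finset.sum_pos' (fun _ _ => norm_nonneg _)
    ⟨g, hg, norm_pos_iff.2 (Finsupp.mem_support_iff.1 hg)⟩

lemma groupAlgNorm2_smul (c : ℂ) (x : MonoidAlgebra ℂ Γ) :
    groupAlgNorm2 (c • x) = ‖c‖ * groupAlgNorm2 x := by
  rcases eq_or_ne c 0 with rfl | hc
  · simp [groupAlgNorm2]
  · rw [groupAlgNorm2, groupAlgNorm2, MonoidAlgebra.coeff_smul, Finsupp.support_smul_eq hc]
    simp only [Finsupp.smul_apply, smul_eq_mul, norm_mul, mul_pow]
    rw [← Finset.mul_sum, Real.sqrt_mul (by positivity), Real.sqrt_sq (norm_nonneg c)]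

lemma groupAlgNorm2_zero : groupAlgNorm2 (0 : MonoidAlgebra ℂ Γ) = 0 := by
  simp [groupAlgNorm2]

lemma groupAlgOpNorm_nonneg (x : MonoidAlgebra ℂ Γ) : 0 ≤ groupAlgOpNorm x := by
  by_cases hb : BddAbove {r : ℝ | ∃ y, groupAlgNorm2 y ≤ 1 ∧ r = groupAlgNorm2 (x * y)}
  · exact le_csSup hb ⟨0, by simp [groupAlgNorm2_zero], by simp [groupAlgNorm2_zero]⟩
  · rw [groupAlgOpNorm, Real.sSup_of_not_bddAbove hb]

lemma groupAlgOpNorm_smul (c : ℂ) (x : MonoidAlgebra ℂ Γ) :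
    groupAlgOpNorm (c • x) = ‖c‖ * groupAlgOpNorm x := by
  have hset : {r : ℝ | ∃ y, groupAlgNorm2 y ≤ 1 ∧ r = groupAlgNorm2 (c • x * y)} =
      ‖c‖ • {r : ℝ | ∃ y, groupAlgNorm2 y ≤ 1 ∧ r = groupAlgNorm2 (x * y)} := by
    ext r
    simp only [Set.mem_smul_set, Set.mem_ofPred_eq, smul_mul_assoc, groupAlgNorm2_smul,
      smul_eq_mul]
    constructor
    · rintro ⟨y, hy, rfl⟩
      exact ⟨_, ⟨y, hy, rfl⟩, rfl⟩
    · rintro ⟨_, ⟨y, hy, rfl⟩, rfl⟩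
      exact ⟨y, hy, rfl⟩
  rw [groupAlgOpNorm, hset, Real.sSup_smul_of_nonneg (norm_nonneg c), smul_eq_mul,
    groupAlgOpNorm]

lemma groupAlgOpNorm_zero : groupAlgOpNorm (0 : MonoidAlgebra ℂ Γ) = 0 := by
  simpa using groupAlgOpNorm_smul 0 (0 : MonoidAlgebra ℂ Γ)

lemma groupAlgMap_smul {G : Type*} [Group G] (φ : Γ →* G) (c : ℂ) (x : MonoidAlgebra ℂ Γ) :
    groupAlgMap φ (c • x) = c • groupAlgMap φ x :=
  congrArg MonoidAlgebra.ofCoeff (Finsupp.mapDomain_smul c x.coeff)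

end GroupAlgebraNorms

lemma ExistentiallyCstarResidually.exists_opNorm_le {G Γ : Type*} [Group G] [Group Γ]
    {ι : G →* Γ} (hres : ExistentiallyCstarResidually ι) (S : Finset Γ) {ε : ℝ} (hε : 0 < ε) :
    ∃ φ : Γ →* G, (∀ g : G, φ (ι g) = g) ∧
      ∀ z : MonoidAlgebra ℂ Γ, (↑z.coeff.support : Set Γ) ⊆ (↑S : Set Γ) →
        groupAlgOpNorm (groupAlgMap φ z) ≤ groupAlgOpNorm z + ε * groupAlgNorm1 z := by
  obtain ⟨φ, hφι, hφ⟩ := hres S ε hε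
  refine ⟨φ, hφι, fun z hz => ?_⟩
  rcases eq_or_ne z 0 with rfl | hz0
  · simp [groupAlgMap, groupAlgNorm1, groupAlgOpNorm_zero]
  set c := groupAlgNorm1 z
  have hc : 0 < c := groupAlgNorm1_pos hz0
  have hcnorm : ‖(c : ℂ)‖ = c := by simp [hc.le]
  have hcz : (c : ℂ) • ((c : ℂ)⁻¹ • z) = z := smul_inv_smul₀ (by exact_mod_cast hc.ne') z
  set w := (c : ℂ)⁻¹ • z
  have hw_supp : w.coeff.support = z.coeff.support :=
    Finsupp.support_smul_eq (inv_ne_zero (by exact_mod_cast hc.ne'))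
  have hw1 : groupAlgNorm1 w = 1 := by
    rw [groupAlgNorm1_smul, norm_inv, hcnorm, inv_mul_cancel₀ hc.ne']
  calc groupAlgOpNorm (groupAlgMap φ z)
      = c * groupAlgOpNorm (groupAlgMap φ w) := by
        rw [← hcz, groupAlgMap_smul, groupAlgOpNorm_smul, hcnorm]
    _ ≤ c * (groupAlgOpNorm w + ε) :=
        mul_le_mul_of_nonneg_left (hφ w (hw_supp ▸ hz) hw1) hc.le
    _ = groupAlgOpNorm z + ε * c := by
        rw [groupAlgOpNorm_smul, norm_inv, hcnorm, mul_add, mul_inv_cancel_left₀ hc.ne',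
          mul_comm]

lemma exists_finset_seq_eventually_superset (α : Type*) [Countable α] :
    ∃ S : ℕ → Finset α, ∀ s : Finset α, ∀ᶠ k in atTop, s ⊆ S k := by
  obtain ⟨f, hf⟩ := Countable.exists_injective_nat α
  refine ⟨fun k => (Finset.range (k + 1)).preimage f hf.injOn, fun s => ?_⟩
  filter_upwards [(Filter.eventually_all_finset s).2 fun a _ => eventually_ge_atTop (f a)]
    with k hk a ha
  simpa [Nat.lt_succ_iff] using hk a ha

lemma Filter.limsup_le_of_eventually_le_of_tendsto {α β : Type*}
    [ConditionallyCompleteLinearOrder β] [TopologicalSpace β] [OrderTopology β]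
    {l : Filter α} [l.NeBot] {f g : α → β} {a : β}
    (hf : l.IsCoboundedUnder (· ≤ ·) f) (hfg : f ≤ᶠ[l] g) (hg : Tendsto g l (𝓝 a)) :
    limsup f l ≤ a :=
  (limsup_le_limsup hfg hf hg.isBoundedUnder_le).trans_eq hg.limsup_eq

lemma Filter.hyperfilter_ne_pure {α : Type*} [Infinite α] (a : α) :
    hyperfilter α ≠ (pure a : Ultrafilter α) := fun h =>
  (Set.finite_singleton a).notMem_hyperfilter (h ▸ Ultrafilter.mem_pure.2 rfl)

theorem existentiallyCstarResidually_ultrapower_general {G Γ : Type*} [Group G] [Group Γ]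
    [Countable Γ]
    (ι : G →* Γ)
    (hres : ExistentiallyCstarResidually ι) :
    ∃ U : Ultrafilter ℕ, (∀ a : ℕ, U ≠ (pure a : Ultrafilter ℕ)) ∧
      ∃ φ : ℕ → (Γ →* G), (∀ k : ℕ, ∀ g : G, φ k (ι g) = g) ∧
        ∀ z : MonoidAlgebra ℂ Γ,
          Filter.limsup (fun k : ℕ => groupAlgOpNorm (groupAlgMap (φ k) z))
            (U : Filter ℕ) ≤ groupAlgOpNorm z := by
  obtain ⟨S, hS⟩ := exists_finset_seq_eventually_superset Γ
  choose φ hφι hφ using fun k : ℕ =>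
    hres.exists_opNorm_le (S k) (Nat.one_div_pos_of_nat (n := k) (α := ℝ))
  refine ⟨hyperfilter ℕ, hyperfilter_ne_pure, φ, hφι, fun z => ?_⟩
  have hbound : ∀ᶠ k in atTop, groupAlgOpNorm (groupAlgMap (φ k) z) ≤
      groupAlgOpNorm z + 1 / ((k : ℝ) + 1) * groupAlgNorm1 z :=
    (hS z.coeff.support).mono fun k hk => hφ k z hk
  have hlim : Tendsto (fun k : ℕ => groupAlgOpNorm z + 1 / ((k : ℝ) + 1) * groupAlgNorm1 z)
      atTop (𝓝 (groupAlgOpNorm z)) := by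
    simpa using ((tendsto_one_div_add_atTop_nhds_zero_nat.mul_const (groupAlgNorm1 z)).const_add
      (groupAlgOpNorm z))
  exact limsup_le_of_eventually_le_of_tendsto
    (isCoboundedUnder_le_of_le _ fun k => groupAlgOpNorm_nonneg _)
    (hbound.filter_mono Nat.hyperfilter_le_atTop) (hlim.mono_left Nat.hyperfilter_le_atTop)

/-- If `Γ` is existentially C*-residually-`G` (via an injective `ι : G → Γ`), then
there are a nonprincipal ultrafilter `U` on `ℕ` and homomorphisms `φₖ : Γ → G` with
`φₖ ∘ ι = id_G` such that for every `z ∈ ℂΓ`,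
`limsup_{k → U} ‖φₖ(z)‖ ≤ ‖z‖` (reduced operator norms). -/
theorem existentiallyCstarResidually_ultrapower {G Γ : Type*} [Group G] [Group Γ]
    [Countable G] [Countable Γ]
    (ι : G →* Γ) (hι : Function.Injective ι)
    (hres : ExistentiallyCstarResidually ι) :
    ∃ U : Ultrafilter ℕ, (∀ a : ℕ, U ≠ (pure a : Ultrafilter ℕ)) ∧
      ∃ φ : ℕ → (Γ →* G), (∀ k : ℕ, ∀ g : G, φ k (ι g) = g) ∧
        ∀ z : MonoidAlgebra ℂ Γ,
          Filter.limsup (fun k : ℕ => groupAlgOpNorm (groupAlgMap (φ k) z))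
            (U : Filter ℕ) ≤ groupAlgOpNorm z :=
  existentiallyCstarResidually_ultrapower_general ι hres
end

section
/- Let Γ = ℤ ∗ (ℤ × ℤ) be the free product of an infinite cyclic group with generator x and the free abelian group ℤ × ℤ with generators y and t (so y and t commute). Then the group homomorphism from the free group F_3 of rank 3 to Γ sending the three free generators to x, y, and t·x·t respectively is injective; in particular, x, y, and t·x·t generate a free subgroup of Γ of rank 3, which contains the rank-2 free subgroup of Γ generated by x and y. -/
/-!
Ping-pong on reduced words of `ℤ ∗ (ℤ × ℤ)`. Read off the leading syllable of a word: `xⁿ` or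
`yᵃtᵇ`. The generators `x^±1`, `y^±1`, `(txt)^±1` attract, respectively, the words led by `xⁿ` with
`±n > 0`, by `yᵃtᵇ` with `±a > 0`, and by exactly `t^±1`. For `txt` this works because `t` commutes
with `y` but not with `x`: whatever `t` does to a leading `ℤ × ℤ`-syllable, as long as it does not
cancel it, the following `x` starts a new syllable, so the final `t` becomes the leading syllable.
-/

open Monoid CoprodI Word Multiplicative Pointwise

namespace Monoid.CoprodI.Word

variable {ι : Type*} {M : ι → Type*} [∀ i, Monoid (M i)] [∀ i, DecidableEq (M i)]
  [DecidableEq ι]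

theorem equivPair_head_smul_same {i : ι} (m : M i) (w : Word M) :
    (equivPair i (of m • w)).head = m * (equivPair i w).head := by
  rw [equivPair_smul_same]

theorem fstIdx_eq_of_equivPair_head_ne_one {i : ι} {w : Word M}
    (h : (equivPair i w).head ≠ 1) : w.fstIdx = some i := by
  by_contra hne
  exact h (by rw [equivPair_eq_of_fstIdx_ne hne])

theorem equivPair_head_eq_one_of_ne {i j : ι} (hij : i ≠ j) {w : Word M}
    (h : (equivPair i w).head ≠ 1) : (equivPair j w).head = 1 := by
  rw [equivPair_eq_of_fstIdx_ne]
  rw [fstIdx_eq_of_equivPair_head_ne_one h]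
  simpa using hij

end Monoid.CoprodI.Word

namespace ExtensionOfCentralizers

local notation "Γ" => Coprod (Multiplicative ℤ) (Multiplicative (ℤ × ℤ))

abbrev Factor : Bool → Type
  | true => Multiplicative ℤ
  | false => Multiplicative (ℤ × ℤ)

instance : ∀ b, Group (Factor b)
  | true => inferInstanceAs (Group (Multiplicative ℤ))
  | false => inferInstanceAs (Group (Multiplicative (ℤ × ℤ)))

instance : ∀ b, DecidableEq (Factor b)
  | true => inferInstanceAs (DecidableEq (Multiplicative ℤ))
  | false => inferInstanceAs (DecidableEq (Multiplicative (ℤ × ℤ)))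

instance : MulAction Γ (Word Factor) :=
  MulAction.compHom _ (Coprod.lift (of (M := Factor) (i := true)) (of (M := Factor) (i := false)))

theorem inl_smul (a : Multiplicative ℤ) (w : Word Factor) :
    (Coprod.inl a : Γ) • w = of (M := Factor) (i := true) a • w :=
  congrArg (· • w) (Coprod.lift_apply_inl (of (M := Factor) (i := true)) (of (i := false)) a)

theorem inr_smul (p : Multiplicative (ℤ × ℤ)) (w : Word Factor) :
    (Coprod.inr p : Γ) • w = of (M := Factor) (i := false) p • w :=
  congrArg (· • w) (Coprod.lift_apply_inr (of (M := Factor) (i := true)) (of (i := false)) p)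

/- The exponent of the leading syllable of `w` when that syllable lies in the factor `ℤ`
(resp. `ℤ × ℤ`), and `0` otherwise. -/
def leadingX (w : Word Factor) : ℤ := toAdd (equivPair true w).head

def leadingYT (w : Word Factor) : ℤ × ℤ := toAdd (equivPair false w).head

@[simp]
theorem leadingX_empty : leadingX empty = 0 := rfl

@[simp]
theorem leadingYT_empty : leadingYT empty = 0 := rfl

theorem leadingX_inl_smul (a : ℤ) (w : Word Factor) :
    leadingX ((Coprod.inl (ofAdd a) : Γ) • w) = a + leadingX w := by
  rw [inl_smul, leadingX, equivPair_head_smul_same]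
  rfl

theorem leadingYT_inr_smul (p : ℤ × ℤ) (w : Word Factor) :
    leadingYT ((Coprod.inr (ofAdd p) : Γ) • w) = p + leadingYT w := by
  rw [inr_smul, leadingYT, equivPair_head_smul_same]
  rfl

theorem leadingYT_eq_zero_of_leadingX_ne_zero {w : Word Factor} (h : leadingX w ≠ 0) :
    leadingYT w = 0 :=
  congrArg toAdd (equivPair_head_eq_one_of_ne (by decide) (w := w) h)

theorem leadingX_eq_zero_of_leadingYT_ne_zero {w : Word Factor} (h : leadingYT w ≠ 0) :
    leadingX w = 0 :=
  congrArg toAdd (equivPair_head_eq_one_of_ne (by decide) (w := w) h)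

theorem leadingYT_inr_inl_inr_smul {a : ℤ} (ha : a ≠ 0) {p q : ℤ × ℤ} {w : Word Factor}
    (hw : p + leadingYT w ≠ 0) :
    leadingYT ((Coprod.inr (ofAdd q) : Γ) • (Coprod.inl (ofAdd a) : Γ) •
      (Coprod.inr (ofAdd p) : Γ) • w) = q := by
  have hpw : leadingYT ((Coprod.inr (ofAdd p) : Γ) • w) ≠ 0 := by rwa [leadingYT_inr_smul]
  have hapw : leadingX ((Coprod.inl (ofAdd a) : Γ) • (Coprod.inr (ofAdd p) : Γ) • w) ≠ 0 := by
    rwa [leadingX_inl_smul, leadingX_eq_zero_of_leadingYT_ne_zero hpw, add_zero]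
  rw [leadingYT_inr_smul, leadingYT_eq_zero_of_leadingX_ne_zero hapw, add_zero]

def gen (ε : ℤˣ) : Fin 3 → Γ :=
  ![Coprod.inl (ofAdd (ε : ℤ)), Coprod.inr (ofAdd ((ε : ℤ), 0)),
    Coprod.inr (ofAdd (0, (ε : ℤ))) * Coprod.inl (ofAdd (ε : ℤ)) * Coprod.inr (ofAdd (0, (ε : ℤ)))]

theorem gen_inv (ε : ℤˣ) (i : Fin 3) : (gen ε i)⁻¹ = gen (-ε) i := by
  fin_cases i <;> simp [gen, ← map_inv, ← ofAdd_neg, mul_assoc]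

def pingPongSet (ε : ℤˣ) : Fin 3 → Set (Word Factor) :=
  ![{w | 0 < ε * leadingX w}, {w | 0 < ε * (leadingYT w).1}, {w | leadingYT w = (0, (ε : ℤ))}]

theorem empty_notMem_pingPongSet (ε : ℤˣ) (i : Fin 3) : empty ∉ pingPongSet ε i := by
  fin_cases i <;> simp [pingPongSet, Prod.ext_iff, eq_comm]

theorem gen_smul_compl_subset (ε : ℤˣ) (i : Fin 3) :
    gen ε i • (pingPongSet (-ε) i)ᶜ ⊆ pingPongSet ε i := by
  rintro _ ⟨w, hw, rfl⟩
  have hεε := Int.units_coe_mul_self ε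
  fin_cases i
  · change ¬0 < -(ε : ℤ) * leadingX w at hw
    change 0 < (ε : ℤ) * leadingX ((Coprod.inl (ofAdd (ε : ℤ)) : Γ) • w)
    rw [leadingX_inl_smul, mul_add]
    linarith
  · change ¬0 < -(ε : ℤ) * (leadingYT w).1 at hw
    change 0 < (ε : ℤ) * (leadingYT ((Coprod.inr (ofAdd ((ε : ℤ), 0)) : Γ) • w)).1
    rw [leadingYT_inr_smul, Prod.fst_add, mul_add]
    linarith
  · change leadingYT w ≠ (0, -(ε : ℤ)) at hw
    change leadingYT ((Coprod.inr (ofAdd (0, (ε : ℤ))) * Coprod.inl (ofAdd (ε : ℤ)) *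
      Coprod.inr (ofAdd (0, (ε : ℤ))) : Γ) • w) = (0, (ε : ℤ))
    rw [mul_smul, mul_smul]
    refine leadingYT_inr_inl_inr_smul ε.ne_zero fun h => hw ?_
    rw [← neg_eq_of_add_eq_zero_right h, Prod.neg_mk, neg_zero]

theorem leadingYT_eq_zero_of_mem_pingPongSet_zero {ε : ℤˣ} {w : Word Factor}
    (hw : w ∈ pingPongSet ε 0) : leadingYT w = 0 :=
  leadingYT_eq_zero_of_leadingX_ne_zero (right_ne_zero_of_mul (ne_of_gt hw))

theorem disjoint_pingPongSet_of_lt (ε ε' : ℤˣ) {i j : Fin 3} (hij : i < j) :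
    Disjoint (pingPongSet ε i) (pingPongSet ε' j) := by
  obtain ⟨rfl, rfl⟩ | ⟨rfl, rfl⟩ | ⟨rfl, rfl⟩ :
      (i = 0 ∧ j = 1) ∨ (i = 0 ∧ j = 2) ∨ (i = 1 ∧ j = 2) := by
    revert i j; decide
  all_goals rw [Set.disjoint_left]; intro w hi hj
  · simp [pingPongSet, leadingYT_eq_zero_of_mem_pingPongSet_zero hi] at hj
  · simp [pingPongSet, leadingYT_eq_zero_of_mem_pingPongSet_zero hi, Prod.ext_iff, eq_comm] at hj
  · simp_all [pingPongSet]

theorem disjoint_pingPongSet_neg (ε : ℤˣ) (i : Fin 3) :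
    Disjoint (pingPongSet (-ε) i) (pingPongSet ε i) := by
  rw [Set.disjoint_left]
  intro w hi hj
  fin_cases i
  · change 0 < -(ε : ℤ) * leadingX w at hi
    change 0 < (ε : ℤ) * leadingX w at hj
    linarith
  · change 0 < -(ε : ℤ) * (leadingYT w).1 at hi
    change 0 < (ε : ℤ) * (leadingYT w).1 at hj
    linarith
  · change leadingYT w = (0, -(ε : ℤ)) at hi
    change leadingYT w = (0, (ε : ℤ)) at hj
    rw [hi, Prod.mk.injEq] at hj
    exact ε.ne_zero (by omega)

theorem disjoint_pingPongSet {ε ε' : ℤˣ} {i j : Fin 3} (h : ε ≠ ε' ∨ i ≠ j) :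
    Disjoint (pingPongSet ε i) (pingPongSet ε' j) := by
  rcases lt_trichotomy i j with hij | rfl | hij
  · exact disjoint_pingPongSet_of_lt ε ε' hij
  · obtain rfl : ε = -ε' := Int.units_ne_iff_eq_neg.1 (h.resolve_right (not_not.2 rfl))
    exact disjoint_pingPongSet_neg ε' i
  · exact (disjoint_pingPongSet_of_lt ε' ε hij).symm

theorem injective_lift_gen : Function.Injective (FreeGroup.lift (gen 1)) := by
  refine FreeGroup.injective_lift_of_ping_pong _ (pingPongSet 1) (pingPongSet (-1))
    (fun i => ?_) (fun i j hij => disjoint_pingPongSet (.inr hij))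
    (fun i j hij => disjoint_pingPongSet (.inr hij)) (fun i j => disjoint_pingPongSet (.inl ?_))
    (gen_smul_compl_subset 1) (fun i => ?_)
  · exact ⟨_, gen_smul_compl_subset 1 i ⟨empty, empty_notMem_pingPongSet _ i, rfl⟩⟩
  · decide
  · simpa [gen_inv] using gen_smul_compl_subset (-1) i

end ExtensionOfCentralizers

/-- In `Γ = ℤ ∗ (ℤ × ℤ)` with `x` the generator of the first factor and `y, t` the
generators of the second (so `y` and `t` commute), the homomorphism `F₃ → Γ` sending
the three free generators to `x`, `y`, `t·x·t` is injective; in particular `x`, `y`,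
`t·x·t` generate a free subgroup of rank 3 containing the rank-2 free subgroup
generated by `x` and `y`. -/
theorem freeSubgroup_of_extension_of_centralizers :
    Function.Injective
      (FreeGroup.lift
        (![Coprod.inl (Multiplicative.ofAdd (1 : ℤ)),
           Coprod.inr (Multiplicative.ofAdd ((1 : ℤ), (0 : ℤ))),
           Coprod.inr (Multiplicative.ofAdd ((0 : ℤ), (1 : ℤ))) *
             Coprod.inl (Multiplicative.ofAdd (1 : ℤ)) *
             Coprod.inr (Multiplicative.ofAdd ((0 : ℤ), (1 : ℤ)))]) :
        FreeGroup (Fin 3) →* Coprod (Multiplicative ℤ) (Multiplicative (ℤ × ℤ))) ∧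
    Subgroup.closure {Coprod.inl (Multiplicative.ofAdd (1 : ℤ)),
        Coprod.inr (Multiplicative.ofAdd ((1 : ℤ), (0 : ℤ)))} ≤
      Subgroup.closure {Coprod.inl (Multiplicative.ofAdd (1 : ℤ)),
        Coprod.inr (Multiplicative.ofAdd ((1 : ℤ), (0 : ℤ))),
        Coprod.inr (Multiplicative.ofAdd ((0 : ℤ), (1 : ℤ))) *
          Coprod.inl (Multiplicative.ofAdd (1 : ℤ)) *
          Coprod.inr (Multiplicative.ofAdd ((0 : ℤ), (1 : ℤ)))} :=
  ⟨by simpa [ExtensionOfCentralizers.gen] using ExtensionOfCentralizers.injective_lift_gen,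
    Subgroup.closure_mono
      (Set.insert_subset_insert (Set.singleton_subset_iff.2 (Set.mem_insert _ _)))⟩
end
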